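/- arXiv:2503.16814 — 3 statements merged into one kernel-verified Lean document; each statement's English description precedes it below -/
import Mathlib

section
/- Zeckendorf's theorem: every positive integer n can be written uniquely as a sum of pairwise non-consecutive Fibonacci numbers F_{k₁} + F_{k₂} + ⋯ + F_{k_r} with k₁ > k₂ + 1 > ⋯, using Fibonacci indices k_i ≥ 2. -/
private instance : IsTrans ℕ fun a b ↦ b + 2 ≤ a where
  trans _ _ _ hba hcb := hcb.trans <| le_self_add.trans hba

theorem List.isZeckendorfRep_iff {l : List ℕ} :
    l.IsZeckendorfRep ↔ l.IsChain (fun a b => b + 2 ≤ a) ∧ ∀ k ∈ l, 2 ≤ k := by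
  simp [List.IsZeckendorfRep, List.isChain_iff_pairwise, List.pairwise_append]

/-- Zeckendorf's theorem: every positive integer is uniquely the sum of pairwise
non-consecutive Fibonacci numbers `F_{k₁} + ⋯ + F_{k_r}` with
`k₁ > k₂ + 1 > ⋯` (indices decreasing, each gap at least 2) and all indices `≥ 2`. -/
theorem zeckendorf (n : ℕ) :
    ∃! l : List ℕ,
      l.Chain' (fun a b => b + 2 ≤ a) ∧ (∀ k ∈ l, 2 ≤ k) ∧
      (l.map Nat.fib).sum = n := by
  refine ⟨n.zeckendorf, ?_, ?_⟩
  · obtain ⟨hchain, hge⟩ := List.isZeckendorfRep_iff.1 n.isZeckendorfRep_zeckendorf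
    exact ⟨hchain, hge, n.sum_zeckendorf_fib⟩
  · rintro l ⟨hchain, hge, rfl⟩
    exact (Nat.zeckendorf_sum_fib (List.isZeckendorfRep_iff.2 ⟨hchain, hge⟩)).symm
end

section
/- In Fibonacci Nim, a starting pile of n stones is a losing position for the first player (under optimal play) if and only if n is a Fibonacci number. -/
/-!
Write `μ n` for the smallest term of the Zeckendorf representation of `n`. A position `(n, q)`
with `n > 0` is lost for the player to move exactly when `q < μ n`. Two inequalities make this
an invariant: every move `0 < m < μ n` leaves a pile with `μ (n - m) ≤ 2 m`, so the opponent can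
take its smallest term; and if `n` is not a Fibonacci number, taking `μ n` leaves a pile with
`μ (n - μ n) > 2 μ n`, out of the opponent's reach. In the initial state `q = n - 1`, so the first
player loses iff `μ n = n`, i.e. iff `n` is a Fibonacci number.
-/

/-- Fibonacci numbers with the indexing `F₁ = 1`, `F₂ = 2`, `Fₙ = Fₙ₋₁ + Fₙ₋₂`. -/
def Fib (k : ℕ) : ℕ := Nat.fib (k + 1)

/-- Losing positions of Fibonacci Nim: a state is `(remaining stones, current
maximum allowed removal)`; a move takes `m` stones with `1 ≤ m ≤ min q n`, after
which the opponent may take at most `2m`. Under normal play the player who takes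
the last stone wins, so a player facing `0` stones loses. -/
def FibNimLosing : ℕ × ℕ → Prop
  | (n, q) => ∀ m, 1 ≤ m → m ≤ q → m ≤ n → ¬ FibNimLosing (n - m, 2 * m)
  termination_by p => p.1
  decreasing_by omega

open Nat

/-- The smallest term of the Zeckendorf representation of `n` (junk value `0` at `n = 0`); the
recursion is the one of `Nat.zeckendorf`. -/
def minZeckendorfTerm (n : ℕ) : ℕ :=
  if _ : n = 0 then 0
  else if fib (greatestFib n) = n then n
  else minZeckendorfTerm (n - fib (greatestFib n))
termination_by n
decreasing_by
  have := fib_pos.2 (greatestFib_pos.2 (Nat.pos_of_ne_zero ‹n ≠ 0›))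
  omega

lemma greatestFib_fib_add {k r : ℕ} (hr : r < fib (k + 1)) :
    greatestFib (fib (k + 2) + r) = k + 2 := by
  have hlt : fib (k + 2) + r < fib (k + 3) := by
    have : fib (k + 3) = fib (k + 1) + fib (k + 2) := fib_add_two
    omega
  exact le_antisymm (Nat.lt_succ_iff.1 (greatestFib_lt.2 hlt))
    (le_greatestFib.2 (Nat.le_add_right _ _))

lemma eq_fib_or_eq_fib_add (n : ℕ) :
    (∃ k, n = fib k) ∨ ∃ k r, 0 < r ∧ r < fib (k + 1) ∧ n = fib (k + 2) + r := by
  by_cases h : fib (greatestFib n) = n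
  · exact .inl ⟨_, h.symm⟩
  have hn : n ≠ 0 := by rintro rfl; simp at h
  obtain ⟨k, hk⟩ : ∃ k, greatestFib n = k + 2 :=
    Nat.exists_eq_add_of_le' (le_greatestFib.2 (by rw [fib_two]; omega))
  have hle := fib_greatestFib_le n
  have hlt := lt_fib_greatestFib_add_one n
  have : fib (k + 2 + 1) = fib (k + 1) + fib (k + 2) := fib_add_two
  rw [hk] at h hle hlt
  exact .inr ⟨k, n - fib (k + 2), by omega, by omega, by omega⟩

lemma minZeckendorfTerm_fib (k : ℕ) : minZeckendorfTerm (fib k) = fib k := by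
  rw [minZeckendorfTerm]
  split_ifs with h₀ h
  · exact h₀.symm
  · rfl
  · exact absurd (le_antisymm (fib_greatestFib_le _) (fib_mono (le_greatestFib.2 le_rfl))) h

lemma minZeckendorfTerm_fib_add {k r : ℕ} (hr₀ : 0 < r) (hr : r < fib (k + 1)) :
    minZeckendorfTerm (fib (k + 2) + r) = minZeckendorfTerm r := by
  rw [minZeckendorfTerm, dif_neg (by omega), greatestFib_fib_add hr, if_neg (by omega),
    Nat.add_sub_cancel_left]

@[elab_as_elim]
theorem zeckendorf_induction {P : ℕ → Prop} (fib_case : ∀ k, P (fib k))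
    (fib_add : ∀ k r, 0 < r → r < fib (k + 1) → P r → P (fib (k + 2) + r)) (n : ℕ) : P n := by
  induction n using Nat.strong_induction_on with
  | _ n ih =>
    obtain ⟨k, rfl⟩ | ⟨k, r, hr₀, hr, rfl⟩ := eq_fib_or_eq_fib_add n
    · exact fib_case k
    · exact fib_add k r hr₀ hr (ih r (by have : 0 < fib (k + 2) := fib_pos.2 (by omega); omega))

lemma minZeckendorfTerm_le (n : ℕ) : minZeckendorfTerm n ≤ n := by
  induction n using zeckendorf_induction with
  | fib_case k => rw [minZeckendorfTerm_fib]
  | fib_add k r hr₀ hr ih => rw [minZeckendorfTerm_fib_add hr₀ hr]; omega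

lemma minZeckendorfTerm_pos {n : ℕ} (hn : 0 < n) : 0 < minZeckendorfTerm n := by
  induction n using zeckendorf_induction with
  | fib_case k => rwa [minZeckendorfTerm_fib]
  | fib_add k r hr₀ hr ih => rw [minZeckendorfTerm_fib_add hr₀ hr]; exact ih hr₀

lemma minZeckendorfTerm_eq_self_iff {n : ℕ} : minZeckendorfTerm n = n ↔ ∃ k, n = fib k := by
  refine ⟨fun h => ?_, fun ⟨k, hk⟩ => hk ▸ minZeckendorfTerm_fib k⟩
  obtain hfib | ⟨k, r, hr₀, hr, rfl⟩ := eq_fib_or_eq_fib_add n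
  · exact hfib
  · have := minZeckendorfTerm_le r
    have : 0 < fib (k + 2) := fib_pos.2 (by omega)
    rw [minZeckendorfTerm_fib_add hr₀ hr] at h
    omega

lemma minZeckendorfTerm_fib_sub_le {k m : ℕ} (hm₀ : 0 < m) (hm : m < fib k) :
    minZeckendorfTerm (fib k - m) ≤ 2 * m := by
  induction k using Nat.strong_induction_on with
  | _ k ih =>
    obtain hk | ⟨i, rfl⟩ : k ≤ 2 ∨ ∃ i, k = i + 3 :=
      (le_or_gt k 2).imp_right fun hk => Nat.exists_eq_add_of_le' hk
    · have := fib_mono hk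
      rw [fib_two] at this
      omega
    have h₃ : fib (i + 3) = fib (i + 1) + fib (i + 2) := fib_add_two
    have h₂ : fib (i + 2) = fib i + fib (i + 1) := fib_add_two
    obtain hmi | him := lt_or_ge m (fib (i + 1))
    · have hr₀ : 0 < fib (i + 1) - m := by omega
      have hr : fib (i + 1) - m < fib (i + 1) := by omega
      rw [show fib (i + 3) - m = fib (i + 2) + (fib (i + 1) - m) by omega,
        minZeckendorfTerm_fib_add hr₀ hr]
      exact ih (i + 1) (by omega) hmi
    · have : fib i ≤ fib (i + 1) := fib_le_fib_succ
      calc minZeckendorfTerm (fib (i + 3) - m)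
          _ ≤ fib (i + 3) - m := minZeckendorfTerm_le _
          _ ≤ fib (i + 2) := by omega
          _ ≤ 2 * m := by omega

lemma minZeckendorfTerm_sub_le {n m : ℕ} (hm₀ : 0 < m) (hm : m < minZeckendorfTerm n) :
    minZeckendorfTerm (n - m) ≤ 2 * m := by
  induction n using zeckendorf_induction with
  | fib_case k => rw [minZeckendorfTerm_fib] at hm; exact minZeckendorfTerm_fib_sub_le hm₀ hm
  | fib_add k r hr₀ hr ih =>
    rw [minZeckendorfTerm_fib_add hr₀ hr] at hm
    have := minZeckendorfTerm_le r
    rw [Nat.add_sub_assoc (by omega), minZeckendorfTerm_fib_add (by omega) (by omega)]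
    exact ih hm

lemma two_mul_lt_minZeckendorfTerm_sub {n : ℕ} (hn : minZeckendorfTerm n < n) :
    2 * minZeckendorfTerm n < minZeckendorfTerm (n - minZeckendorfTerm n) := by
  induction n using zeckendorf_induction with
  | fib_case k => rw [minZeckendorfTerm_fib] at hn; omega
  | fib_add k r hr₀ hr ih =>
    rw [minZeckendorfTerm_fib_add hr₀ hr]
    obtain hlt | heq := (minZeckendorfTerm_le r).lt_or_eq
    · rw [Nat.add_sub_assoc hlt.le, minZeckendorfTerm_fib_add (by omega) (by omega)]
      exact ih hlt
    · obtain ⟨j, rfl⟩ := minZeckendorfTerm_eq_self_iff.1 heq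
      have : fib j ≤ fib k := fib_mono (Nat.lt_succ_iff.1 (fib_mono.reflect_lt hr))
      have : fib (k + 2) = fib k + fib (k + 1) := fib_add_two
      rw [heq, Nat.add_sub_cancel, minZeckendorfTerm_fib]
      omega

lemma fibNimLosing_iff (n q : ℕ) : FibNimLosing (n, q) ↔ n = 0 ∨ q < minZeckendorfTerm n := by
  induction n using Nat.strong_induction_on generalizing q with
  | _ n ih =>
    rw [FibNimLosing]
    have hle := minZeckendorfTerm_le n
    constructor
    · intro hlost
      refine or_iff_not_imp_left.2 fun hn => lt_of_not_ge fun hq => ?_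
      have hpos := minZeckendorfTerm_pos (Nat.pos_of_ne_zero hn)
      refine hlost _ hpos hq hle ((ih _ (by omega) _).2 ?_)
      obtain hlt | heq := hle.lt_or_eq
      · exact .inr (two_mul_lt_minZeckendorfTerm_sub hlt)
      · exact .inl (by omega)
    · rintro (rfl | hq) m hm₀ hmq hmn hlost
      · omega
      · have := minZeckendorfTerm_sub_le hm₀ (by omega : m < minZeckendorfTerm n)
        rw [ih _ (by omega)] at hlost
        omega

/-- Fibonacci Nim: a starting pile of `n ≥ 2` stones (first player may take
between `1` and `n - 1` stones) is a losing position for the first player iff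
`n` is a Fibonacci number. -/
theorem fibNim_losing_iff_fib (n : ℕ) (hn : 2 ≤ n) :
    FibNimLosing (n, n - 1) ↔ ∃ k, 1 ≤ k ∧ n = Fib k := by
  have := minZeckendorfTerm_le n
  rw [fibNimLosing_iff, or_iff_right (by omega),
    show n - 1 < minZeckendorfTerm n ↔ minZeckendorfTerm n = n by omega,
    minZeckendorfTerm_eq_self_iff]
  constructor
  · rintro ⟨_ | _ | k, rfl⟩
    · simp at hn
    · simp at hn
    · exact ⟨k + 1, le_add_self, rfl⟩
  · rintro ⟨k, -, rfl⟩
    exact ⟨k + 1, rfl⟩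
end

section
/- In the game Chomp on an m × n grid with m, n ≥ 2 (and not both equal to 1), the first player has a winning strategy. -/
/-- A Chomp move: select a remaining square `p` other than the poisoned square
`(0,0)` and remove every square weakly above and to the right of it. -/
def ChompMove (S S' : Finset (ℕ × ℕ)) : Prop :=
  ∃ p ∈ S, p ≠ (0, 0) ∧ S' = S.filter (fun q => ¬ (p.1 ≤ q.1 ∧ p.2 ≤ q.2))

/-- Losing positions of Chomp: the player to move loses iff every move leads to
a non-losing position; in particular the player facing only the poisoned square
`{(0,0)}` has no move and loses (being forced to take the poison). -/
def ChompLosing : Finset (ℕ × ℕ) → Prop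
  | S => ∀ S', ChompMove S S' → ¬ ChompLosing S'
  termination_by S => S.card
  decreasing_by
    rename_i h
    obtain ⟨p, hp, -, rfl⟩ := h
    exact Finset.card_lt_card (Finset.filter_ssubset.mpr ⟨p, hp, by simp⟩)

/-- A winning position: some move leads to a losing position for the opponent. -/
def ChompWinning (S : Finset (ℕ × ℕ)) : Prop :=
  ∃ S', ChompMove S S' ∧ ChompLosing S'

/-- Gale's theorem (strategy stealing): in Chomp on an `m × n` grid with
`m, n ≥ 2`, the first player has a winning strategy. -/
theorem chomp_first_player_wins (m n : ℕ) (hm : 2 ≤ m) (hn : 2 ≤ n) :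
    ChompWinning (Finset.range m ×ˢ Finset.range n) := by
  classical
  set S : Finset (ℕ × ℕ) := Finset.range m ×ˢ Finset.range n with hS
  by_contra hw
  have hL : ChompLosing S := by
    rw [ChompLosing]
    intro S' hmv hLS'
    exact hw ⟨S', hmv, hLS'⟩
  set c : ℕ × ℕ := (m - 1, n - 1) with hcdef
  have hmemS : ∀ q : ℕ × ℕ, q ∈ S ↔ q.1 < m ∧ q.2 < n := by
    intro q; simp [hS, Finset.mem_product]
  have hc : c ∈ S := (hmemS c).mpr (by simp only [hcdef]; omega)
  set S' : Finset (ℕ × ℕ) := S.filter (fun q => ¬ (c.1 ≤ q.1 ∧ c.2 ≤ q.2)) with hS'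
  have hmv1 : ChompMove S S' := ⟨c, hc, by simp [hcdef, Prod.ext_iff]; omega, rfl⟩
  have hnL : ¬ ChompLosing S' := by
    rw [ChompLosing] at hL
    exact hL S' hmv1
  rw [ChompLosing] at hnL
  push_neg at hnL
  obtain ⟨S'', hmv2, hL2⟩ := hnL
  obtain ⟨p, hp, hp0, hfilt⟩ := hmv2
  have hpS : p ∈ S := Finset.mem_filter.mp hp |>.1
  have hsteal : ChompMove S S'' := by
    refine ⟨p, hpS, hp0, ?_⟩
    rw [hfilt, hS', Finset.filter_filter]
    apply Finset.filter_congr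
    intro q hq
    have hq' := (hmemS q).mp hq
    have hp' := (hmemS p).mp hpS
    simp only [hcdef]
    constructor
    · tauto
    · intro h
      refine ⟨?_, h⟩
      rintro ⟨h1, h2⟩
      exact h ⟨by omega, by omega⟩
  rw [ChompLosing] at hL
  exact hL S'' hsteal hL2
end
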